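/- Let X = F_e be a Hirzebruch surface, c_2 > 1 an integer, α ∈ {0,1}, and 1 ≤ n ≤ c_2 − 1. Set ξ_n = C_0 − (2c_2 − α − 2n)F. Then ξ_n defines a wall of type (C_0 + αF, c_2): ξ_n^2 < 0, ξ_n + (C_0 + αF) is divisible by 2 in Pic(X), c_2 + (ξ_n^2 − (C_0+αF)^2)/4 = n > 0, and ξ_n separates the ample divisors L_n = C_0 + (e + 2c_2 − α − 2n + 1)F and L_{n+1} = C_0 + (e + 2c_2 − α − 2n − 1)F, i.e. L_{n+1}·ξ_n = −1 < 0 < 1 = L_n·ξ_n. -/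
import Mathlib

/-- Intersection product on `Pic(F_e) = ℤC₀ ⊕ ℤF`, with `C₀² = −e`, `F² = 0`,
`C₀·F = 1`. -/
def hirzDot (e : ℤ) (x y : ℤ × ℤ) : ℤ := -e * x.1 * y.1 + x.1 * y.2 + x.2 * y.1

/-- On `X = F_e`, with `c₂ > 1`, `α ∈ {0,1}`, `1 ≤ n ≤ c₂ − 1`, the class
`ξ_n = C₀ − (2c₂ − α − 2n)F` defines a wall of type `(C₀ + αF, c₂)`:
`ξ_n² < 0`, `ξ_n + (C₀ + αF)` is divisible by 2 in `Pic(X)`,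
`c₂ + (ξ_n² − (C₀+αF)²)/4 = n > 0`, and `ξ_n` separates the ample divisors
`L_n = C₀ + (e+2c₂−α−2n+1)F` and `L_{n+1} = C₀ + (e+2c₂−α−2n−1)F`, i.e.
`L_{n+1}·ξ_n = −1 < 0 < 1 = L_n·ξ_n`. -/
theorem xi_defines_wall (e c2 α n : ℤ) (he : 0 ≤ e) (hc2 : 1 < c2)
    (hα : α = 0 ∨ α = 1) (hn1 : 1 ≤ n) (hn2 : n ≤ c2 - 1)
    (ξ c1 Ln Ln1 : ℤ × ℤ)
    (hξ : ξ = (1, -(2 * c2 - α - 2 * n)))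
    (hc1 : c1 = (1, α))
    (hLn : Ln = (1, e + 2 * c2 - α - 2 * n + 1))
    (hLn1 : Ln1 = (1, e + 2 * c2 - α - 2 * n - 1)) :
    hirzDot e ξ ξ < 0 ∧
    (∃ η : ℤ × ℤ, ξ + c1 = (2 : ℤ) • η) ∧
    c2 + (hirzDot e ξ ξ - hirzDot e c1 c1) / 4 = n ∧ 0 < n ∧
    hirzDot e Ln1 ξ = -1 ∧ hirzDot e Ln ξ = 1 := by
  subst hξ hc1 hLn hLn1
  refine ⟨?_, ⟨(1, (α - (2 * c2 - α - 2 * n)) / 2), ?_⟩, ?_, by omega, ?_, ?_⟩ <;>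
    simp only [hirzDot, Prod.smul_mk, smul_eq_mul, Prod.mk_add_mk, Prod.mk.injEq] <;>
    first | (constructor <;> omega) | omega
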